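/- Let C be an essentially small abelian category, 𝒢 a generator of C, and S a dense complete full subcategory of C containing 𝒢; let g(S) be the subgroup of K0(C) generated by {[A] : A ∈ S}. Then the relation ~ on isomorphism classes of objects of C, given by A ~ B if and only if there exist objects S_A and S_B in S with A ⊕ S_A ≅ B ⊕ S_B, is an equivalence relation whose quotient G_S is an abelian group under {A} + {B} := {A ⊕ B} with identity {0}; the map K0(C)/g(S) → G_S sending [A] + g(S) to {A} is a well-defined group isomorphism; and an object A of C belongs to S if and only if [A] ∈ g(S). -/

import Mathlib

/-!
Grothendieck groups of essentially small abelian categories.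

`K0 C` is the quotient of the free abelian group on the isomorphism classes of objects
of `C` by the subgroup generated by the Euler relations `⟨A⟩ - ⟨B⟩ + ⟨C⟩` coming from
short exact sequences `0 ⟶ A ⟶ B ⟶ C ⟶ 0`; `K0.mk C A` is the class `[A]`.
A full subcategory (identified with its set of objects) is *dense* if every object of `C`
is a direct summand of an object of the subcategory, and *complete* if whenever two of
the three objects of a short exact sequence lie in it, so does the third.
A *generator* (resp. *cogenerator*) is a full additive subcategory `𝒢` such that every
object `A` fits in a short exact sequence `0 ⟶ A' ⟶ G ⟶ A ⟶ 0`
(resp. `0 ⟶ A ⟶ G ⟶ A' ⟶ 0`) with `G ∈ 𝒢`.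
-/

open CategoryTheory CategoryTheory.Limits ZeroObject

universe w v u

namespace AbK0

variable (C : Type u) [Category.{v} C] [Abelian C]

/-- `IsSES f g` says that `0 ⟶ A ⟶ B ⟶ D ⟶ 0` given by `f : A ⟶ B` and `g : B ⟶ D`
is a short exact sequence. -/
def IsSES {A B D : C} (f : A ⟶ B) (g : B ⟶ D) : Prop :=
  ∃ w : f ≫ g = 0, (ShortComplex.mk f g w).ShortExact

/-- The isomorphism class of an object. -/
def isoCl (A : C) : Quotient (isIsomorphicSetoid C) := Quotient.mk (isIsomorphicSetoid C) A

/-- The subgroup of Euler relations coming from short exact sequences. -/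
def K0Rels : AddSubgroup (FreeAbelianGroup (Quotient (isIsomorphicSetoid C))) :=
  AddSubgroup.closure
    { x | ∃ S : ShortComplex C, S.ShortExact ∧
        x = FreeAbelianGroup.of (isoCl C S.X₁) - FreeAbelianGroup.of (isoCl C S.X₂)
          + FreeAbelianGroup.of (isoCl C S.X₃) }

/-- The Grothendieck group of the abelian category `C`. -/
def K0 : Type u := FreeAbelianGroup (Quotient (isIsomorphicSetoid C)) ⧸ K0Rels C

noncomputable instance : AddCommGroup (K0 C) :=
  QuotientAddGroup.Quotient.addCommGroup _

/-- The class `[A]` of an object `A` in the Grothendieck group. -/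
def K0.mk (A : C) : K0 C := QuotientAddGroup.mk (FreeAbelianGroup.of (isoCl C A))

/-- A full subcategory is dense if every object of `C` is a direct summand of an object
of the subcategory. -/
noncomputable def DenseSub (S : Set C) : Prop :=
  ∀ A : C, ∃ X ∈ S, ∃ A' : C, Nonempty (X ≅ A ⊞ A')

/-- A full subcategory is complete if, in any short exact sequence, whenever two of the
three objects belong to the subcategory, so does the third. -/
def CompleteSub (S : Set C) : Prop :=
  ∀ ⦃A B D : C⦄ (f : A ⟶ B) (g : B ⟶ D), IsSES C f g →
    ((A ∈ S → B ∈ S → D ∈ S) ∧ (A ∈ S → D ∈ S → B ∈ S) ∧ (B ∈ S → D ∈ S → A ∈ S))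

/-- A full additive subcategory: it contains a zero object and is closed under
binary direct sums. -/
noncomputable def AdditiveSub (G : Set C) : Prop :=
  (0 : C) ∈ G ∧ ∀ A B : C, A ∈ G → B ∈ G → (A ⊞ B) ∈ G

/-- `𝒢` is a generator of `C`: a full additive subcategory such that every object `A`
admits a short exact sequence `0 ⟶ A' ⟶ G ⟶ A ⟶ 0` with `G ∈ 𝒢`. -/
noncomputable def IsGenerator (G : Set C) : Prop :=
  AdditiveSub C G ∧
    ∀ A : C, ∃ (A' Gb : C) (f : A' ⟶ Gb) (g : Gb ⟶ A), Gb ∈ G ∧ IsSES C f g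

/-- `𝒢` is a cogenerator of `C`: a full additive subcategory such that every object `A`
admits a short exact sequence `0 ⟶ A ⟶ G ⟶ A' ⟶ 0` with `G ∈ 𝒢`. -/
noncomputable def IsCogenerator (G : Set C) : Prop :=
  AdditiveSub C G ∧
    ∀ A : C, ∃ (Gb A' : C) (f : A ⟶ Gb) (g : Gb ⟶ A'), Gb ∈ G ∧ IsSES C f g

end AbK0

open AbK0

/-!
Stable isomorphism modulo `S` is a congruence for `⊞` (closure of `S` under direct sums), and
`{A}` has the inverse `{A'}` for any `A'` with `A ⊞ A' ∈ S` (density). The class map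
`A ↦ {A}` is additive on short exact sequences `0 ⟶ A ⟶ B ⟶ D ⟶ 0`: choosing `A ⊞ A'` and
`D ⊞ D'` in `S` and adding the split sequence `A' ⟶ A' ⊞ D' ⟶ D'`, completeness puts
`B ⊞ A' ⊞ D'` in `S`, so `{B} = -{A'} - {D'} = {A} + {D}`. Hence it factors through
`K₀(C)/g(S)`, with inverse `{A} ↦ [A]`. Finally `[A] ∈ g(S)` means `{A} = {0}`, i.e.
`A ⊞ S_A ∈ S` for some `S_A ∈ S`, and then `A ∈ S` by completeness.
-/

namespace CategoryTheory.ShortComplex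

variable {C : Type u} [Category.{v} C] [Abelian C]

lemma shortExact_of_isIso {A B : C} (f : A ⟶ B) [IsIso f] :
    (ShortComplex.mk f (0 : B ⟶ 0) comp_zero).ShortExact :=
  .mk' ((exact_iff_epi _ rfl).2 inferInstance) inferInstance ((isZero_zero C).epi _)

lemma shortExact_inl_snd (A B : C) :
    (ShortComplex.mk (biprod.inl : A ⟶ A ⊞ B) biprod.snd biprod.inl_snd).ShortExact :=
  (Splitting.ofHasBinaryBiproduct A B).shortExact

lemma exact_biprod {S₁ S₂ : ShortComplex C} (h₁ : S₁.Exact) (h₂ : S₂.Exact) :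
    (ShortComplex.mk (biprod.map S₁.f S₂.f) (biprod.map S₁.g S₂.g)
      (by ext <;> simp)).Exact := by
  set S := ShortComplex.mk (biprod.map S₁.f S₂.f) (biprod.map S₁.g S₂.g) _
  let fst : S ⟶ S₁ := ⟨biprod.fst, biprod.fst, biprod.fst, by simp [S], by simp [S]⟩
  let snd : S ⟶ S₂ := ⟨biprod.snd, biprod.snd, biprod.snd, by simp [S], by simp [S]⟩
  let inl : S₁ ⟶ S := ⟨biprod.inl, biprod.inl, biprod.inl, by simp [S], by simp [S]⟩
  let inr : S₂ ⟶ S := ⟨biprod.inr, biprod.inr, biprod.inr, by simp [S], by simp [S]⟩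
  have htotal : fst ≫ inl + snd ≫ inr = 𝟙 S :=
    ShortComplex.hom_ext _ _ biprod.total biprod.total biprod.total
  -- `𝟙 S` factors through `S₁` and `S₂`, whose homology vanishes
  rw [exact_iff_isZero_homology, IsZero.iff_id_eq_zero, ← homologyMap_id, ← htotal,
    homologyMap_add, homologyMap_comp, homologyMap_comp,
    (S₁.exact_iff_isZero_homology.1 h₁).eq_of_src (homologyMap inl) 0,
    (S₂.exact_iff_isZero_homology.1 h₂).eq_of_src (homologyMap inr) 0]
  simp

lemma ShortExact.biprod {S₁ S₂ : ShortComplex C} (h₁ : S₁.ShortExact)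
    (h₂ : S₂.ShortExact) :
    (ShortComplex.mk (biprod.map S₁.f S₂.f) (biprod.map S₁.g S₂.g)
      (by ext <;> simp)).ShortExact :=
  have := h₁.mono_f; have := h₂.mono_f; have := h₁.epi_g; have := h₂.epi_g
  .mk' (exact_biprod h₁.exact h₂.exact) inferInstance inferInstance

end CategoryTheory.ShortComplex

namespace AbK0

variable {C : Type u} [Category.{v} C] [Abelian C]

section CompleteSub

variable {S : Set C}

lemma CompleteSub.mem_X₁ (hS : CompleteSub C S) {X : ShortComplex C} (hX : X.ShortExact)
    (h₂ : X.X₂ ∈ S) (h₃ : X.X₃ ∈ S) : X.X₁ ∈ S :=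
  (hS X.f X.g ⟨X.zero, hX⟩).2.2 h₂ h₃

lemma CompleteSub.mem_X₂ (hS : CompleteSub C S) {X : ShortComplex C} (hX : X.ShortExact)
    (h₁ : X.X₁ ∈ S) (h₃ : X.X₃ ∈ S) : X.X₂ ∈ S :=
  (hS X.f X.g ⟨X.zero, hX⟩).2.1 h₁ h₃

lemma CompleteSub.mem_X₃ (hS : CompleteSub C S) {X : ShortComplex C} (hX : X.ShortExact)
    (h₁ : X.X₁ ∈ S) (h₂ : X.X₂ ∈ S) : X.X₃ ∈ S :=
  (hS X.f X.g ⟨X.zero, hX⟩).1 h₁ h₂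

lemma CompleteSub.zero_mem (hS : CompleteSub C S) (hd : DenseSub C S) : (0 : C) ∈ S := by
  obtain ⟨X, hX, -⟩ := hd 0
  exact hS.mem_X₃ (ShortComplex.shortExact_of_isIso (𝟙 X)) hX hX

lemma CompleteSub.mem_of_iso (hS : CompleteSub C S) (h0 : (0 : C) ∈ S) {A B : C} (e : A ≅ B)
    (hA : A ∈ S) : B ∈ S :=
  hS.mem_X₂ (ShortComplex.shortExact_of_isIso e.hom) hA h0

lemma CompleteSub.biprod_mem (hS : CompleteSub C S) {A B : C} (hA : A ∈ S) (hB : B ∈ S) :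
    (A ⊞ B) ∈ S :=
  hS.mem_X₂ (ShortComplex.shortExact_inl_snd A B) hA hB

lemma CompleteSub.mem_of_biprod_mem (hS : CompleteSub C S) {A B : C} (hAB : (A ⊞ B) ∈ S)
    (hB : B ∈ S) : A ∈ S :=
  hS.mem_X₁ (ShortComplex.shortExact_inl_snd A B) hAB hB

end CompleteSub

section StablyIso

variable {S : Set C}

variable (S) in
def StablyIso (A B : C) : Prop :=
  ∃ SA ∈ S, ∃ SB ∈ S, Nonempty ((A ⊞ SA) ≅ B ⊞ SB)

noncomputable def biprodRightComm (X Y Z : C) : (X ⊞ Y) ⊞ Z ≅ (X ⊞ Z) ⊞ Y :=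
  biprod.associator X Y Z ≪≫ biprod.mapIso (Iso.refl X) (biprod.braiding Y Z) ≪≫
    (biprod.associator X Z Y).symm

lemma stablyIso_of_iso (h0 : (0 : C) ∈ S) {A B : C} (e : A ≅ B) : StablyIso S A B :=
  ⟨0, h0, 0, h0, ⟨biprod.mapIso e (Iso.refl 0)⟩⟩

lemma StablyIso.symm {A B : C} : StablyIso S A B → StablyIso S B A
  | ⟨SA, hSA, SB, hSB, ⟨e⟩⟩ => ⟨SB, hSB, SA, hSA, ⟨e.symm⟩⟩

lemma StablyIso.trans (hS : CompleteSub C S) {A B D : C} :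
    StablyIso S A B → StablyIso S B D → StablyIso S A D
  | ⟨SA, hSA, SB, hSB, ⟨e⟩⟩, ⟨TB, hTB, TD, hTD, ⟨e'⟩⟩ =>
    ⟨SA ⊞ TB, hS.biprod_mem hSA hTB, TD ⊞ SB, hS.biprod_mem hTD hSB,
      ⟨(biprod.associator A SA TB).symm ≪≫ biprod.mapIso e (Iso.refl TB) ≪≫
        biprodRightComm B SB TB ≪≫ biprod.mapIso e' (Iso.refl SB) ≪≫
        biprod.associator D TD SB⟩⟩

lemma stablyIso_equivalence (hS : CompleteSub C S) (h0 : (0 : C) ∈ S) :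
    Equivalence (StablyIso S) :=
  ⟨fun A => stablyIso_of_iso h0 (Iso.refl A), StablyIso.symm, StablyIso.trans hS⟩

lemma StablyIso.biprod_left {A A' : C} (B : C) :
    StablyIso S A A' → StablyIso S (A ⊞ B) (A' ⊞ B)
  | ⟨SA, hSA, SA', hSA', ⟨e⟩⟩ =>
    ⟨SA, hSA, SA', hSA', ⟨biprodRightComm A B SA ≪≫ biprod.mapIso e (Iso.refl B) ≪≫
      biprodRightComm A' SA' B⟩⟩

lemma StablyIso.biprod_right (A : C) {B B' : C} :
    StablyIso S B B' → StablyIso S (A ⊞ B) (A ⊞ B')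
  | ⟨SB, hSB, SB', hSB', ⟨e⟩⟩ =>
    ⟨SB, hSB, SB', hSB', ⟨biprod.associator A B SB ≪≫ biprod.mapIso (Iso.refl A) e ≪≫
      (biprod.associator A B' SB').symm⟩⟩

lemma mem_of_stablyIso_zero (hS : CompleteSub C S) (h0 : (0 : C) ∈ S) {A : C} :
    StablyIso S A 0 → A ∈ S
  | ⟨_, hSA, _, hSB, ⟨e⟩⟩ =>
    hS.mem_of_biprod_mem (hS.mem_of_iso h0 (isoZeroBiprod (isZero_zero C) ≪≫ e.symm) hSB) hSA

end StablyIso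

namespace K0

lemma mk_eq_of_iso {A B : C} (e : A ≅ B) : K0.mk C A = K0.mk C B :=
  congrArg (fun q => QuotientAddGroup.mk (FreeAbelianGroup.of q)) (Quotient.sound ⟨e⟩)

lemma mk_X₂ {X : ShortComplex C} (hX : X.ShortExact) :
    K0.mk C X.X₂ = K0.mk C X.X₁ + K0.mk C X.X₃ := by
  have h := (QuotientAddGroup.eq_zero_iff _).2
    (AddSubgroup.subset_closure ⟨X, hX, rfl⟩ : _ ∈ K0Rels C)
  rw [QuotientAddGroup.mk_add, QuotientAddGroup.mk_sub, sub_add_eq_add_sub, sub_eq_zero] at h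
  exact h.symm

lemma mk_biprod (A B : C) : K0.mk C (A ⊞ B) = K0.mk C A + K0.mk C B :=
  mk_X₂ (ShortComplex.shortExact_inl_snd A B)

section lift

variable {M : Type*} [AddCommGroup M]

def IsAdditive (f : C → M) : Prop :=
  ∀ X : ShortComplex C, X.ShortExact → f X.X₂ = f X.X₁ + f X.X₃

lemma IsAdditive.eq_of_iso {f : C → M} (hf : IsAdditive f) {A B : C} (e : A ≅ B) :
    f A = f B := by
  have f_zero : f 0 = 0 := by
    simpa using hf _ (ShortComplex.shortExact_of_isIso (𝟙 (0 : C)))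
  simpa [f_zero] using (hf _ (ShortComplex.shortExact_of_isIso e.hom)).symm

def lift (f : C → M) (hf : IsAdditive f) : K0 C →+ M :=
  QuotientAddGroup.lift _
    (FreeAbelianGroup.lift (Quotient.lift f fun _ _ ⟨e⟩ => hf.eq_of_iso e))
    ((AddSubgroup.closure_le _).2 <| by
      rintro _ ⟨X, hX, rfl⟩
      simp only [SetLike.mem_coe, AddMonoidHom.mem_ker, map_add, map_sub,
        FreeAbelianGroup.lift_apply_of]
      change f X.X₁ - f X.X₂ + f X.X₃ = 0
      rw [hf X hX]
      abel)

lemma lift_mk (f : C → M) (hf : IsAdditive f) (A : C) : lift f hf (K0.mk C A) = f A :=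
  (QuotientAddGroup.lift_mk _ _ _).trans (FreeAbelianGroup.lift_apply_of _ _)

lemma hom_ext {f g : K0 C →+ M} (h : ∀ A, f (K0.mk C A) = g (K0.mk C A)) : f = g :=
  QuotientAddGroup.addMonoidHom_ext _ <|
    FreeAbelianGroup.lift_ext _ _ fun q => Quotient.inductionOn q h

end lift

/-- The subgroup `g(S)` of the paper. -/
noncomputable def classSubgroup (S : Set C) : AddSubgroup (K0 C) :=
  AddSubgroup.closure (K0.mk C '' S)

lemma mk_mem_classSubgroup {S : Set C} {A : C} (hA : A ∈ S) : K0.mk C A ∈ classSubgroup S :=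
  AddSubgroup.subset_closure ⟨A, hA, rfl⟩

lemma mk_eq_mk_of_stablyIso {S : Set C} {A B : C} (h : StablyIso S A B) :
    (K0.mk C A : K0 C ⧸ classSubgroup S) = K0.mk C B := by
  obtain ⟨SA, hSA, SB, hSB, ⟨e⟩⟩ := h
  have h := congrArg (QuotientAddGroup.mk (s := classSubgroup S)) (mk_eq_of_iso e)
  rwa [mk_biprod, mk_biprod, QuotientAddGroup.mk_add, QuotientAddGroup.mk_add,
    (QuotientAddGroup.eq_zero_iff _).2 (mk_mem_classSubgroup hSA),
    (QuotientAddGroup.eq_zero_iff _).2 (mk_mem_classSubgroup hSB), add_zero, add_zero] at h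

end K0

variable (C) in
structure DenseCompleteSub where
  carrier : Set C
  dense : DenseSub C carrier
  complete : CompleteSub C carrier

namespace DenseCompleteSub

variable (P : DenseCompleteSub C)

lemma zero_mem : (0 : C) ∈ P.carrier := P.complete.zero_mem P.dense

/-- The group `G_S` of the paper, with `mkGS A = {A}`. -/
def GS : Type u := Quot (StablyIso P.carrier)

def mkGS (A : C) : P.GS := Quot.mk _ A

lemma mkGS_surjective : Function.Surjective P.mkGS := Quot.exists_rep

variable {P}

lemma mkGS_eq_mkGS_iff {A B : C} : P.mkGS A = P.mkGS B ↔ StablyIso P.carrier A B :=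
  (stablyIso_equivalence P.complete P.zero_mem).quot_mk_eq_iff A B

lemma mkGS_eq_of_iso {A B : C} (e : A ≅ B) : P.mkGS A = P.mkGS B :=
  Quot.sound (stablyIso_of_iso P.zero_mem e)

noncomputable instance : Add P.GS :=
  ⟨Quot.map₂ (· ⊞ ·) (fun A _ _ h => h.biprod_right A) (fun _ _ B h => h.biprod_left B)⟩

noncomputable instance : Zero P.GS := ⟨P.mkGS 0⟩

lemma mkGS_add_mkGS (A B : C) : P.mkGS A + P.mkGS B = P.mkGS (A ⊞ B) := rfl

lemma mkGS_zero : P.mkGS 0 = 0 := rfl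

noncomputable instance : AddCommMonoid P.GS where
  add_assoc := P.mkGS_surjective.forall₃.2 fun A B D => mkGS_eq_of_iso (biprod.associator A B D)
  zero_add := P.mkGS_surjective.forall.2 fun _ =>
    mkGS_eq_of_iso (isoZeroBiprod (isZero_zero C)).symm
  add_zero := P.mkGS_surjective.forall.2 fun _ =>
    mkGS_eq_of_iso (isoBiprodZero (isZero_zero C)).symm
  add_comm := P.mkGS_surjective.forall₂.2 fun A B => mkGS_eq_of_iso (biprod.braiding A B)
  nsmul := nsmulRec

lemma mkGS_eq_zero_iff {A : C} : P.mkGS A = 0 ↔ A ∈ P.carrier := by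
  rw [← mkGS_zero, mkGS_eq_mkGS_iff]
  exact ⟨mem_of_stablyIso_zero P.complete P.zero_mem,
    fun hA => ⟨0, P.zero_mem, A, hA, ⟨biprod.braiding A 0⟩⟩⟩

lemma exists_neg_add (x : P.GS) : ∃ y, y + x = 0 := by
  obtain ⟨A, rfl⟩ := P.mkGS_surjective x
  obtain ⟨X, hX, A', ⟨e⟩⟩ := P.dense A
  exact ⟨P.mkGS A', mkGS_eq_zero_iff.2
    (P.complete.mem_of_iso P.zero_mem (e ≪≫ biprod.braiding A A') hX)⟩

noncomputable instance : Neg P.GS := ⟨fun x => (exists_neg_add x).choose⟩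

noncomputable instance : AddCommGroup P.GS where
  neg_add_cancel x := (exists_neg_add x).choose_spec
  zsmul := zsmulRec

lemma mkGS_isAdditive : K0.IsAdditive P.mkGS := by
  intro X hX
  obtain ⟨Y₁, hY₁, A', ⟨e₁⟩⟩ := P.dense X.X₁
  obtain ⟨Y₃, hY₃, D', ⟨e₃⟩⟩ := P.dense X.X₃
  have hA : (X.X₁ ⊞ A') ∈ P.carrier := P.complete.mem_of_iso P.zero_mem e₁ hY₁
  have hD : (X.X₃ ⊞ D') ∈ P.carrier := P.complete.mem_of_iso P.zero_mem e₃ hY₃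
  have hB : (X.X₂ ⊞ (A' ⊞ D')) ∈ P.carrier :=
    P.complete.mem_X₂ (hX.biprod (ShortComplex.shortExact_inl_snd A' D')) hA hD
  rw [← mkGS_eq_zero_iff, ← mkGS_add_mkGS] at hA hD hB
  rw [← mkGS_add_mkGS, eq_neg_of_add_eq_zero_right hA, eq_neg_of_add_eq_zero_right hD,
    ← neg_add, add_neg_eq_zero] at hB
  exact hB

variable (P)

noncomputable def toGS : K0 C ⧸ K0.classSubgroup P.carrier →+ P.GS :=
  QuotientAddGroup.lift _ (K0.lift P.mkGS mkGS_isAdditive) <|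
    (AddSubgroup.closure_le _).2 <| by
      rintro _ ⟨A, hA, rfl⟩
      rw [SetLike.mem_coe, AddMonoidHom.mem_ker, K0.lift_mk]
      exact mkGS_eq_zero_iff.2 hA

noncomputable def ofGS : P.GS →+ K0 C ⧸ K0.classSubgroup P.carrier :=
  AddMonoidHom.mk'
    (Quot.lift (fun A => (K0.mk C A : K0 C ⧸ _)) fun _ _ => K0.mk_eq_mk_of_stablyIso)
    (P.mkGS_surjective.forall₂.2 fun A B => by
      simp only [mkGS_add_mkGS]
      exact congrArg QuotientAddGroup.mk (K0.mk_biprod A B))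

lemma toGS_mk (A : C) : P.toGS (K0.mk C A) = P.mkGS A := K0.lift_mk _ mkGS_isAdditive A

lemma ofGS_mkGS (A : C) : P.ofGS (P.mkGS A) = K0.mk C A := rfl

noncomputable def quotientK0EquivGS : K0 C ⧸ K0.classSubgroup P.carrier ≃+ P.GS :=
  AddMonoidHom.toAddEquiv P.toGS P.ofGS
    (QuotientAddGroup.addMonoidHom_ext _ <| K0.hom_ext fun A => by
      change P.ofGS (P.toGS (K0.mk C A)) = K0.mk C A
      rw [toGS_mk, ofGS_mkGS])
    (AddMonoidHom.ext <| P.mkGS_surjective.forall.2 fun A => by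
      change P.toGS (P.ofGS (P.mkGS A)) = P.mkGS A
      rw [ofGS_mkGS, toGS_mk])

lemma quotientK0EquivGS_mk (A : C) : P.quotientK0EquivGS (K0.mk C A) = P.mkGS A :=
  P.toGS_mk A

lemma mem_iff_mk_mem_classSubgroup {A : C} :
    A ∈ P.carrier ↔ K0.mk C A ∈ K0.classSubgroup P.carrier := by
  refine ⟨K0.mk_mem_classSubgroup, fun h => mkGS_eq_zero_iff.1 ?_⟩
  rw [← toGS_mk, (QuotientAddGroup.eq_zero_iff _).2 h, map_zero]

end DenseCompleteSub

end AbK0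

theorem quotient_K0_iso_GS_abelian_general
    (C : Type u) [Category.{v} C] [Abelian C]
    (S : Set C) (hdense : DenseSub C S) (hcomplete : CompleteSub C S)
    (r : C → C → Prop)
    (hr : ∀ A B : C, r A B ↔ ∃ SA ∈ S, ∃ SB ∈ S, Nonempty ((A ⊞ SA) ≅ B ⊞ SB)) :
    Equivalence r ∧
    (∃ inst : AddCommGroup (Quot r), letI := inst;
      ((∀ A B : C, Quot.mk r A + Quot.mk r B = Quot.mk r (A ⊞ B)) ∧
       ((0 : Quot r) = Quot.mk r (0 : C)) ∧
       ∃ φ : (K0 C ⧸ AddSubgroup.closure (K0.mk C '' S)) ≃+ Quot r,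
         ∀ A : C, φ (QuotientAddGroup.mk (K0.mk C A)) = Quot.mk r A)) ∧
    (∀ A : C, A ∈ S ↔ K0.mk C A ∈ AddSubgroup.closure (K0.mk C '' S)) := by
  obtain rfl : r = StablyIso S := funext₂ fun A B => propext (hr A B)
  obtain ⟨P, rfl⟩ : ∃ P : DenseCompleteSub C, P.carrier = S :=
    ⟨⟨S, hdense, hcomplete⟩, rfl⟩
  exact ⟨stablyIso_equivalence P.complete P.zero_mem,
    ⟨(inferInstance : AddCommGroup P.GS), DenseCompleteSub.mkGS_add_mkGS,
      DenseCompleteSub.mkGS_zero.symm, P.quotientK0EquivGS, P.quotientK0EquivGS_mk⟩,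
    fun _ => P.mem_iff_mk_mem_classSubgroup⟩

/-- For a generator `𝒢` and a dense complete full subcategory `S ⊇ 𝒢` of an abelian
category: the relation `A ~ B ↔ ∃ S_A, S_B ∈ S, A ⊕ S_A ≅ B ⊕ S_B` is an equivalence
relation whose quotient `G_S` is an abelian group with `{A} + {B} = {A ⊕ B}` and
identity `{0}`; the map `K₀(C)/g(S) → G_S`, `[A] + g(S) ↦ {A}`, is a well-defined group
isomorphism; and `A ∈ S ↔ [A] ∈ g(S)`. -/
theorem quotient_K0_iso_GS_abelian
    (C : Type u) [Category.{v} C] [Abelian C] [EssentiallySmall.{w} C]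
    (G : Set C) (hG : IsGenerator C G)
    (S : Set C) (hdense : DenseSub C S) (hcomplete : CompleteSub C S) (hGS : G ⊆ S)
    (r : C → C → Prop)
    (hr : ∀ A B : C, r A B ↔ ∃ SA ∈ S, ∃ SB ∈ S, Nonempty ((A ⊞ SA) ≅ B ⊞ SB)) :
    Equivalence r ∧
    (∃ inst : AddCommGroup (Quot r), letI := inst;
      ((∀ A B : C, Quot.mk r A + Quot.mk r B = Quot.mk r (A ⊞ B)) ∧
       ((0 : Quot r) = Quot.mk r (0 : C)) ∧
       ∃ φ : (K0 C ⧸ AddSubgroup.closure (K0.mk C '' S)) ≃+ Quot r,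
         ∀ A : C, φ (QuotientAddGroup.mk (K0.mk C A)) = Quot.mk r A)) ∧
    (∀ A : C, A ∈ S ↔ K0.mk C A ∈ AddSubgroup.closure (K0.mk C '' S)) :=
  quotient_K0_iso_GS_abelian_general C S hdense hcomplete r hr
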